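/- arXiv:2512.01445 — 2 statements merged into one kernel-verified Lean document; each statement's English description precedes it below -/
import Mathlib

section
/- Let 0 < ρ₁ < ρ₂, h₁, h₂ > 0, g > 0, and define P and U_c as above. If 0 < U < U_c then there exists a unique s⋆ > 0 with P(s⋆) = U; if U > U_c then there is no s > 0 with P(s) = U. -/
/-!
With `xcoth x = x coth x` one has `R s = (ρ₁/h₁) xcoth (2π h₁ s) + (ρ₂/h₂) xcoth (2π h₂ s)`.
On `(0, ∞)` the function `xcoth` is continuous, strictly increasing, tends to `1` at `0⁺` and
to `∞` at `∞`. Hence `R` increases continuously from `ρ₁/h₁ + ρ₂/h₂` to `∞`, so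
`P = √((ρ₂ - ρ₁) g / R)` decreases continuously from `U_c` to `0`, and by the intermediate value
theorem it maps `(0, ∞)` bijectively onto `(0, U_c)`.
-/

open Real Set Filter Topology

noncomputable def xcoth (x : ℝ) : ℝ := x * cosh x / sinh x

lemma continuousOn_xcoth : ContinuousOn xcoth (Ioi 0) :=
  (continuous_id.mul continuous_cosh).continuousOn.div continuous_sinh.continuousOn
    fun _ hx => (sinh_pos_iff.2 hx).ne'

lemma sinh_lt_self_mul_cosh {x : ℝ} (hx : 0 < x) : sinh x < x * cosh x := by
  have hmono : StrictMonoOn (fun x => x * cosh x - sinh x) (Ici 0) := by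
    refine strictMonoOn_of_deriv_pos (convex_Ici 0) (by fun_prop) fun y hy => ?_
    rw [interior_Ici, mem_Ioi] at hy
    have hd : HasDerivAt (fun x => x * cosh x - sinh x) (1 * cosh y + y * sinh y - cosh y) y :=
      ((hasDerivAt_id y).mul (hasDerivAt_cosh y)).sub (hasDerivAt_sinh y)
    rw [hd.deriv]
    nlinarith [sinh_pos_iff.2 hy]
  simpa using hmono self_mem_Ici hx.le hx

lemma one_lt_xcoth {x : ℝ} (hx : 0 < x) : 1 < xcoth x := by
  rw [xcoth, lt_div_iff₀ (sinh_pos_iff.2 hx), one_mul]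
  exact sinh_lt_self_mul_cosh hx

lemma xcoth_lt_cosh {x : ℝ} (hx : 0 < x) : xcoth x < cosh x := by
  rw [xcoth, div_lt_iff₀ (sinh_pos_iff.2 hx), mul_comm]
  exact mul_lt_mul_of_pos_left (self_lt_sinh_iff.2 hx) (cosh_pos x)

lemma self_lt_xcoth {x : ℝ} (hx : 0 < x) : x < xcoth x := by
  rw [xcoth, lt_div_iff₀ (sinh_pos_iff.2 hx)]
  exact mul_lt_mul_of_pos_left (sinh_lt_cosh x) hx

lemma strictMonoOn_xcoth : StrictMonoOn xcoth (Ioi 0) := by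
  refine strictMonoOn_of_deriv_pos (convex_Ioi 0) continuousOn_xcoth fun y hy => ?_
  rw [interior_Ioi, mem_Ioi] at hy
  have hsinh := sinh_pos_iff.2 hy
  have hd : HasDerivAt xcoth
      (((1 * cosh y + y * sinh y) * sinh y - y * cosh y * cosh y) / sinh y ^ 2) y :=
    ((hasDerivAt_id y).mul (hasDerivAt_cosh y)).div (hasDerivAt_sinh y) hsinh.ne'
  rw [hd.deriv]
  refine div_pos ?_ (pow_pos hsinh 2)
  -- the numerator is `sinh y * cosh y - y = (sinh (2 * y) - 2 * y) / 2`
  have h2 : 2 * y < sinh (2 * y) := self_lt_sinh_iff.2 (by linarith)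
  rw [sinh_two_mul] at h2
  nlinarith [cosh_sq_sub_sinh_sq y]

lemma tendsto_xcoth_nhdsGT_zero : Tendsto xcoth (𝓝[>] 0) (𝓝 1) := by
  refine tendsto_of_tendsto_of_tendsto_of_le_of_le' tendsto_const_nhds ?_
    (eventually_nhdsWithin_of_forall fun x hx => (one_lt_xcoth hx).le)
    (eventually_nhdsWithin_of_forall fun x hx => (xcoth_lt_cosh hx).le)
  simpa using (continuous_cosh.tendsto 0).mono_left nhdsWithin_le_nhds

lemma tendsto_xcoth_atTop : Tendsto xcoth atTop atTop :=
  tendsto_atTop_mono' _ (eventually_gt_atTop 0 |>.mono fun _ hx => (self_lt_xcoth hx).le)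
    tendsto_id

section Scaled

variable {a k : ℝ}

lemma continuousOn_const_mul_xcoth_mul (hk : 0 < k) :
    ContinuousOn (fun s => a * xcoth (k * s)) (Ioi 0) :=
  continuousOn_const.mul <| continuousOn_xcoth.comp (continuousOn_const.mul continuousOn_id)
    fun _ hs => mul_pos hk hs

lemma strictMonoOn_const_mul_xcoth_mul (ha : 0 < a) (hk : 0 < k) :
    StrictMonoOn (fun s => a * xcoth (k * s)) (Ioi 0) := fun _ hs _ ht hst =>
  mul_lt_mul_of_pos_left (strictMonoOn_xcoth (mul_pos hk hs) (mul_pos hk ht)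
    (mul_lt_mul_of_pos_left hst hk)) ha

lemma lt_const_mul_xcoth_mul (ha : 0 < a) (hk : 0 < k) {s : ℝ} (hs : 0 < s) :
    a < a * xcoth (k * s) :=
  lt_mul_of_one_lt_right ha (one_lt_xcoth (mul_pos hk hs))

lemma tendsto_const_mul_xcoth_mul_nhdsGT_zero (hk : 0 < k) :
    Tendsto (fun s => a * xcoth (k * s)) (𝓝[>] 0) (𝓝 a) := by
  have hks : Tendsto (k * ·) (𝓝[>] 0) (𝓝[>] 0) :=
    tendsto_nhdsWithin_iff.2
      ⟨by simpa using ((continuous_const_mul k).tendsto 0).mono_left nhdsWithin_le_nhds,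
        eventually_nhdsWithin_of_forall fun _ hs => mul_pos hk hs⟩
  simpa using (tendsto_xcoth_nhdsGT_zero.comp hks).const_mul a

lemma tendsto_const_mul_xcoth_mul_atTop (ha : 0 < a) (hk : 0 < k) :
    Tendsto (fun s => a * xcoth (k * s)) atTop atTop :=
  (tendsto_xcoth_atTop.comp (tendsto_id.const_mul_atTop hk)).const_mul_atTop ha

end Scaled

section SqrtDiv

variable {R : ℝ → ℝ} {A D : ℝ}

lemma strictAntiOn_sqrt_div {S : Set ℝ} (hD : 0 < D) (hR : StrictMonoOn R S)
    (hpos : ∀ s ∈ S, 0 < R s) : StrictAntiOn (fun s => √(D / R s)) S := fun s hs t ht hst =>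
  sqrt_lt_sqrt (div_pos hD (hpos t ht)).le (div_lt_div_of_pos_left hD (hpos s hs) (hR hs ht hst))

lemma image_sqrt_div_Ioi_eq_Ioo (hA : 0 < A) (hD : 0 < D) (hR : ContinuousOn R (Ioi 0))
    (hRA : ∀ s ∈ Ioi (0 : ℝ), A < R s) (hR0 : Tendsto R (𝓝[>] 0) (𝓝 A))
    (hRtop : Tendsto R atTop atTop) :
    (fun s => √(D / R s)) '' Ioi 0 = Ioo 0 √(D / A) := by
  refine Subset.antisymm ?_ ?_
  · rintro _ ⟨s, hs, rfl⟩
    have hRs := hRA s hs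
    exact ⟨sqrt_pos.2 (div_pos hD (hA.trans hRs)),
      sqrt_lt_sqrt (div_pos hD (hA.trans hRs)).le (div_lt_div_of_pos_left hD hA hRs)⟩
  · have hcont : ContinuousOn (fun s => √(D / R s)) (Ioi 0) :=
      (continuousOn_const.div hR fun s hs => (hA.trans (hRA s hs)).ne').sqrt
    have htop : Tendsto (fun s => √(D / R s)) atTop (𝓝 0) := by
      simpa using (tendsto_const_nhds.div_atTop hRtop).sqrt
    exact isPreconnected_Ioi.intermediate_value_Ioo (le_principal_iff.2 (Ioi_mem_atTop 0))
      (show 𝓝[>] (0 : ℝ) ≤ 𝓟 (Ioi 0) from inf_le_right) hcont htop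
      (tendsto_const_nhds.div hR0 hA.ne').sqrt

end SqrtDiv

theorem critical_speed_dichotomy (ρ₁ ρ₂ h₁ h₂ g U : ℝ)
    (hρ₁ : 0 < ρ₁) (hρ : ρ₁ < ρ₂) (hh₁ : 0 < h₁) (hh₂ : 0 < h₂) (hg : 0 < g)
    (R P : ℝ → ℝ)
    (hR : ∀ s, R s = 2 * Real.pi * s *
        (ρ₁ * (Real.cosh (2 * Real.pi * s * h₁) / Real.sinh (2 * Real.pi * s * h₁)) +
         ρ₂ * (Real.cosh (2 * Real.pi * s * h₂) / Real.sinh (2 * Real.pi * s * h₂))))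
    (hP : ∀ s, P s = Real.sqrt ((ρ₂ - ρ₁) * g / R s)) :
    (0 < U → U < Real.sqrt ((ρ₂ - ρ₁) * g / (ρ₁ / h₁ + ρ₂ / h₂)) →
      ∃! s : ℝ, 0 < s ∧ P s = U) ∧
    (U > Real.sqrt ((ρ₂ - ρ₁) * g / (ρ₁ / h₁ + ρ₂ / h₂)) →
      ¬ ∃ s : ℝ, 0 < s ∧ P s = U) := by
  have ha₁ : 0 < ρ₁ / h₁ := div_pos hρ₁ hh₁
  have ha₂ : 0 < ρ₂ / h₂ := div_pos (hρ₁.trans hρ) hh₂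
  have hk₁ : 0 < 2 * π * h₁ := by positivity
  have hk₂ : 0 < 2 * π * h₂ := by positivity
  have hD : 0 < (ρ₂ - ρ₁) * g := mul_pos (sub_pos.2 hρ) hg
  have hRsum : R = fun s => ρ₁ / h₁ * xcoth (2 * π * h₁ * s) + ρ₂ / h₂ * xcoth (2 * π * h₂ * s) :=
    funext fun s => by rw [hR, xcoth, xcoth]; field_simp
  have hRlow : ∀ s ∈ Ioi (0 : ℝ), ρ₁ / h₁ + ρ₂ / h₂ < R s := fun s hs => hRsum ▸
    add_lt_add (lt_const_mul_xcoth_mul ha₁ hk₁ hs) (lt_const_mul_xcoth_mul ha₂ hk₂ hs)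
  have hRmono : StrictMonoOn R (Ioi 0) := hRsum ▸
    (strictMonoOn_const_mul_xcoth_mul ha₁ hk₁).add (strictMonoOn_const_mul_xcoth_mul ha₂ hk₂)
  have hPR : P = fun s => √((ρ₂ - ρ₁) * g / R s) := funext hP
  have himage : P '' Ioi 0 = Ioo 0 √((ρ₂ - ρ₁) * g / (ρ₁ / h₁ + ρ₂ / h₂)) := hPR ▸
    image_sqrt_div_Ioi_eq_Ioo (add_pos ha₁ ha₂) hD
      (hRsum ▸ (continuousOn_const_mul_xcoth_mul hk₁).add (continuousOn_const_mul_xcoth_mul hk₂))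
      hRlow
      (hRsum ▸ (tendsto_const_mul_xcoth_mul_nhdsGT_zero hk₁).add
        (tendsto_const_mul_xcoth_mul_nhdsGT_zero hk₂))
      (hRsum ▸ (tendsto_const_mul_xcoth_mul_atTop ha₁ hk₁).atTop_add_atTop
        (tendsto_const_mul_xcoth_mul_atTop ha₂ hk₂))
  have hinj : InjOn P (Ioi 0) := hPR ▸
    (strictAntiOn_sqrt_div hD hRmono fun s hs => (add_pos ha₁ ha₂).trans (hRlow s hs)).injOn
  refine ⟨fun hU hUc => ?_, fun hUc ⟨s, hs, hPs⟩ => ?_⟩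
  · obtain ⟨s, hs, hPs⟩ : U ∈ P '' Ioi 0 := himage ▸ ⟨hU, hUc⟩
    exact ⟨s, ⟨hs, hPs⟩, fun t ⟨ht, hPt⟩ => hinj ht hs (hPt.trans hPs.symm)⟩
  · have hUmem : U ∈ P '' Ioi 0 := ⟨s, hs, hPs⟩
    exact (himage ▸ hUmem).2.not_gt hUc
end

section
/- Let ε ≥ 0, ω ∈ ℝ, ω_ε = ω + iε, Δt > 0, T > 0, and C ≥ 0, p ≥ 1. Suppose the sequence (μ⁽ᵏ⁾) and the exact values (μ(kΔt)) satisfy μ⁽ᵏ⁺¹⁾ = e^{iω_ε Δt}(μ⁽ᵏ⁾ − Q_k) and μ((k+1)Δt) = e^{iω_ε Δt}(μ(kΔt) − I_k), with |Q_k − I_k| ≤ C·Δt^{p+1} for all k, and μ⁽⁰⁾ = μ(0). Then for all k with kΔt ≤ T, |μ⁽ᵏ⁾ − μ(kΔt)| ≤ T·C·Δt^p. -/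
/-! The error `eₖ = μ⁽ᵏ⁾ - μ(kΔt)` obeys `eₖ₊₁ = e^{iω_εΔt}(eₖ - (Qₖ - Iₖ))` with a propagator of
modulus `e^{-εΔt} ≤ 1`, so the local errors `C Δt^{p+1}` accumulate at most linearly:
`|eₖ| ≤ k C Δt^{p+1} = (kΔt) C Δt^p ≤ T C Δt^p`. -/

open Complex

theorem norm_exp_I_mul_le_one {z : ℂ} (hz : 0 ≤ z.im) : ‖exp (I * z)‖ ≤ 1 := by
  rw [norm_exp, Real.exp_le_one_iff]
  simpa using hz

theorem le_natCast_mul_of_le_add {u : ℕ → ℝ} {δ : ℝ} (h0 : u 0 ≤ 0)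
    (hstep : ∀ k, u (k + 1) ≤ u k + δ) (k : ℕ) : u k ≤ k * δ := by
  induction k with
  | zero => simpa using h0
  | succ k ih => push_cast; linarith [hstep k]

theorem norm_sub_le_of_smul_recurrence {𝕜 E : Type*} [NormedField 𝕜] [NormedAddCommGroup E]
    [NormedSpace 𝕜 E] {a : 𝕜} (ha : ‖a‖ ≤ 1) {x y q r : ℕ → E} {δ : ℝ}
    (hx : ∀ k, x (k + 1) = a • (x k - q k)) (hy : ∀ k, y (k + 1) = a • (y k - r k))
    (hqr : ∀ k, ‖q k - r k‖ ≤ δ) (h0 : x 0 = y 0) (k : ℕ) :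
    ‖x k - y k‖ ≤ k * δ := by
  refine le_natCast_mul_of_le_add (u := fun k ↦ ‖x k - y k‖) (by simp [h0]) (fun k ↦ ?_) k
  have herr : x (k + 1) - y (k + 1) = a • ((x k - y k) - (q k - r k)) := by
    rw [hx, hy, ← smul_sub]; abel_nf
  calc ‖x (k + 1) - y (k + 1)‖ = ‖a‖ * ‖(x k - y k) - (q k - r k)‖ := by rw [herr, norm_smul]
    _ ≤ ‖(x k - y k) - (q k - r k)‖ := mul_le_of_le_one_left (norm_nonneg _) ha
    _ ≤ ‖x k - y k‖ + δ := (norm_sub_le _ _).trans (add_le_add le_rfl (hqr k))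

open Complex in
theorem exponential_integrator_error_general (ω ε Δt T C p : ℝ)
    (hε : 0 ≤ ε) (hΔt : 0 < Δt) (hC : 0 ≤ C)
    (ωε : ℂ) (hωε : ωε = (ω : ℂ) + I * ε)
    (μnum : ℕ → ℂ) (μex : ℕ → ℂ) (Q Iq : ℕ → ℂ)
    (hnum : ∀ k, μnum (k + 1) = Complex.exp (I * ωε * Δt) * (μnum k - Q k))
    (hex : ∀ k, μex (k + 1) = Complex.exp (I * ωε * Δt) * (μex k - Iq k))
    (hQI : ∀ k, ‖Q k - Iq k‖ ≤ C * Δt ^ (p + 1))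
    (h0 : μnum 0 = μex 0) :
    ∀ k : ℕ, (k : ℝ) * Δt ≤ T →
      ‖μnum k - μex k‖ ≤ T * C * Δt ^ p := by
  intro k hk
  have hdamped : ‖Complex.exp (I * ωε * Δt)‖ ≤ 1 := by
    have him : (ωε * Δt).im = ε * Δt := by simp [hωε]
    rw [mul_assoc]
    exact norm_exp_I_mul_le_one (him ▸ by positivity)
  calc ‖μnum k - μex k‖ ≤ k * (C * Δt ^ (p + 1)) :=
        norm_sub_le_of_smul_recurrence hdamped hnum hex hQI h0 k
    _ = (k * Δt) * (C * Δt ^ p) := by rw [Real.rpow_add_one hΔt.ne']; ring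
    _ ≤ T * (C * Δt ^ p) := by gcongr
    _ = T * C * Δt ^ p := by ring

open Complex in
theorem exponential_integrator_error (ω ε Δt T C p : ℝ)
    (hε : 0 ≤ ε) (hΔt : 0 < Δt) (hT : 0 < T) (hC : 0 ≤ C) (hp : 1 ≤ p)
    (ωε : ℂ) (hωε : ωε = (ω : ℂ) + I * ε)
    (μnum : ℕ → ℂ) (μex : ℕ → ℂ) (Q Iq : ℕ → ℂ)
    (hnum : ∀ k, μnum (k + 1) = Complex.exp (I * ωε * Δt) * (μnum k - Q k))
    (hex : ∀ k, μex (k + 1) = Complex.exp (I * ωε * Δt) * (μex k - Iq k))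
    (hQI : ∀ k, ‖Q k - Iq k‖ ≤ C * Δt ^ (p + 1))
    (h0 : μnum 0 = μex 0) :
    ∀ k : ℕ, (k : ℝ) * Δt ≤ T →
      ‖μnum k - μex k‖ ≤ T * C * Δt ^ p :=
  exponential_integrator_error_general ω ε Δt T C p hε hΔt hC ωε hωε μnum μex Q Iq hnum hex hQI h0
end
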